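/- Let j > 0, k > 0, ℓ ≥ 0, μ_h, μ_ℓ, G, ρ ∈ ℝ, and π₁, π₂, π₃ ≥ 0 with π₁ + π₂ + π₃ = 1. Set Q = |μ_h|·k + |μ_ℓ|·j + j·k·ℓ, assume Q > 0, and let Δt = jk/Q and p₁ = kμ_h⁺/Q, p₂ = jμ_ℓ⁺/Q, p₃ = kμ_h⁻/Q, p₄ = jμ_ℓ⁻/Q, p₅ = jkℓπ₁/Q, p₆ = jkℓπ₂/Q, p₇ = jkℓπ₃/Q. Fix (h,ℓ₀) ∈ ℝ², and set y₁ = (h+j, ℓ₀), y₂ = (h, ℓ₀+k), y₃ = (h−j, ℓ₀), y₄ = (h, ℓ₀−k), and arbitrary points y₅, y₆, y₇ ∈ ℝ². Then for every function v : ℝ² → ℝ and assuming 1 + ρΔt ≠ 0: (Σ_{m=1}^{7} p_m v(y_m) + G·Δt)/(1 + ρ·Δt) − v(h,ℓ₀) = (Δt/(1 + ρ·Δt)) · [ −ρ·v(h,ℓ₀) + μ_h⁺·(v(h+j,ℓ₀) − v(h,ℓ₀))/j − μ_h⁻·(v(h,ℓ₀) − v(h−j,ℓ₀))/j + μ_ℓ⁺·(v(h,ℓ₀+k)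 − v(h,ℓ₀))/k − μ_ℓ⁻·(v(h,ℓ₀) − v(h,ℓ₀−k))/k + ℓ·(π₁(v(y₅) − v(h,ℓ₀)) + π₂(v(y₆) − v(h,ℓ₀)) + π₃(v(y₇) − v(h,ℓ₀))) + G ], where x⁺ = max(x,0), x⁻ = max(−x,0). -/

import Mathlib

/-!
Each weight is `p_m = Δt · r_m`, where `r_m` is the rate of the corresponding move of the
upwind discretization of `𝓛` (`μ_h⁺/j`, `μ_ℓ⁺/k`, `μ_h⁻/j`, `μ_ℓ⁻/k`, `ℓπ_i`), and the weights
sum to `1` because `|μ| = μ⁺ + μ⁻` and `π₁ + π₂ + π₃ = 1`. Hence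
`Σ p_m v(y_m) - v = Σ p_m (v(y_m) - v) = Δt · 𝓛v`, and the defect of the scheme map is then
`(v + Δt 𝓛v + GΔt)/(1 + ρΔt) - v = Δt (-ρv + 𝓛v + G)/(1 + ρΔt)`.
-/

theorem scheme_defect_eq {S V L G ρ Δt : ℝ} (hden : 1 + ρ * Δt ≠ 0) (hS : S - V = Δt * L) :
    (S + G * Δt) / (1 + ρ * Δt) - V = Δt / (1 + ρ * Δt) * (-(ρ * V) + L + G) := by
  rw [div_sub' hden, div_mul_eq_mul_div]
  congr 1
  linear_combination hS

theorem upwind_weights_sum_eq_one {j k ℓ μh μl π₁ π₂ π₃ : ℝ} (hπsum : π₁ + π₂ + π₃ = 1)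
    (hQ : |μh| * k + |μl| * j + j * k * ℓ ≠ 0) :
    let Q := |μh| * k + |μl| * j + j * k * ℓ
    k * max μh 0 / Q + j * max μl 0 / Q + k * max (-μh) 0 / Q + j * max (-μl) 0 / Q
      + j * k * ℓ * π₁ / Q + j * k * ℓ * π₂ / Q + j * k * ℓ * π₃ / Q = 1 := by
  intro Q
  simp only [← add_div]
  rw [div_eq_one_iff_eq hQ, ← max_zero_add_max_neg_zero_eq_abs_self μh,
    ← max_zero_add_max_neg_zero_eq_abs_self μl]
  linear_combination j * k * ℓ * hπsum

theorem scheme_consistency_general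
    (j k ℓ μh μl G ρ : ℝ) (hj : 0 < j) (hk : 0 < k)
    (π₁ π₂ π₃ : ℝ)
    (hπsum : π₁ + π₂ + π₃ = 1)
    (hQ : 0 < |μh| * k + |μl| * j + j * k * ℓ)
    (h ℓ₀ : ℝ) (y₅ y₆ y₇ : ℝ × ℝ) (v : ℝ × ℝ → ℝ) :
    let Q : ℝ := |μh| * k + |μl| * j + j * k * ℓ
    let Δt : ℝ := j * k / Q
    let p₁ : ℝ := k * max μh 0 / Q
    let p₂ : ℝ := j * max μl 0 / Q
    let p₃ : ℝ := k * max (-μh) 0 / Q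
    let p₄ : ℝ := j * max (-μl) 0 / Q
    let p₅ : ℝ := j * k * ℓ * π₁ / Q
    let p₆ : ℝ := j * k * ℓ * π₂ / Q
    let p₇ : ℝ := j * k * ℓ * π₃ / Q
    1 + ρ * Δt ≠ 0 →
    (p₁ * v (h + j, ℓ₀) + p₂ * v (h, ℓ₀ + k) + p₃ * v (h - j, ℓ₀) + p₄ * v (h, ℓ₀ - k)
        + p₅ * v y₅ + p₆ * v y₆ + p₇ * v y₇ + G * Δt) / (1 + ρ * Δt) - v (h, ℓ₀)
      = (Δt / (1 + ρ * Δt)) *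
        (-(ρ * v (h, ℓ₀))
          + max μh 0 * (v (h + j, ℓ₀) - v (h, ℓ₀)) / j
          - max (-μh) 0 * (v (h, ℓ₀) - v (h - j, ℓ₀)) / j
          + max μl 0 * (v (h, ℓ₀ + k) - v (h, ℓ₀)) / k
          - max (-μl) 0 * (v (h, ℓ₀) - v (h, ℓ₀ - k)) / k
          + ℓ * (π₁ * (v y₅ - v (h, ℓ₀)) + π₂ * (v y₆ - v (h, ℓ₀))
              + π₃ * (v y₇ - v (h, ℓ₀)))
          + G) := by
  intro Q Δt p₁ p₂ p₃ p₄ p₅ p₆ p₇ hden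
  have hsum : p₁ + p₂ + p₃ + p₄ + p₅ + p₆ + p₇ = 1 := upwind_weights_sum_eq_one hπsum hQ.ne'
  obtain ⟨hp₁, hp₂, hp₃, hp₄, hp₅, hp₆, hp₇⟩ :
      p₁ = Δt * (max μh 0 / j) ∧ p₂ = Δt * (max μl 0 / k) ∧ p₃ = Δt * (max (-μh) 0 / j) ∧
      p₄ = Δt * (max (-μl) 0 / k) ∧ p₅ = Δt * (ℓ * π₁) ∧ p₆ = Δt * (ℓ * π₂) ∧
      p₇ = Δt * (ℓ * π₃) := by
    refine ⟨?_, ?_, ?_, ?_, ?_, ?_, ?_⟩ <;> simp only [p₁, p₂, p₃, p₄, p₅, p₆, p₇, Δt] <;>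
      field_simp
  set V := v (h, ℓ₀)
  have hS : p₁ * v (h + j, ℓ₀) + p₂ * v (h, ℓ₀ + k) + p₃ * v (h - j, ℓ₀) + p₄ * v (h, ℓ₀ - k)
        + p₅ * v y₅ + p₆ * v y₆ + p₇ * v y₇ - V
      = Δt * (max μh 0 * (v (h + j, ℓ₀) - V) / j - max (-μh) 0 * (V - v (h - j, ℓ₀)) / j
          + max μl 0 * (v (h, ℓ₀ + k) - V) / k - max (-μl) 0 * (V - v (h, ℓ₀ - k)) / k
          + ℓ * (π₁ * (v y₅ - V) + π₂ * (v y₆ - V) + π₃ * (v y₇ - V))) := by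
    linear_combination V * hsum + (v (h + j, ℓ₀) - V) * hp₁ + (v (h, ℓ₀ + k) - V) * hp₂
      + (v (h - j, ℓ₀) - V) * hp₃ + (v (h, ℓ₀ - k) - V) * hp₄ + (v y₅ - V) * hp₅
      + (v y₆ - V) * hp₆ + (v y₇ - V) * hp₇
  rw [scheme_defect_eq hden hS]
  ring

/-- Consistency of the scheme: the defect of the scheme map at `v` equals
`Δt/(1+ρΔt)` times the upwind finite-difference discretization of `ρv = 𝓛v + G`. -/
theorem scheme_consistency
    (j k ℓ μh μl G ρ : ℝ) (hj : 0 < j) (hk : 0 < k) (hℓ : 0 ≤ ℓ)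
    (π₁ π₂ π₃ : ℝ) (hπ₁ : 0 ≤ π₁) (hπ₂ : 0 ≤ π₂) (hπ₃ : 0 ≤ π₃)
    (hπsum : π₁ + π₂ + π₃ = 1)
    (hQ : 0 < |μh| * k + |μl| * j + j * k * ℓ)
    (h ℓ₀ : ℝ) (y₅ y₆ y₇ : ℝ × ℝ) (v : ℝ × ℝ → ℝ) :
    let Q : ℝ := |μh| * k + |μl| * j + j * k * ℓ
    let Δt : ℝ := j * k / Q
    let p₁ : ℝ := k * max μh 0 / Q
    let p₂ : ℝ := j * max μl 0 / Q
    let p₃ : ℝ := k * max (-μh) 0 / Q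
    let p₄ : ℝ := j * max (-μl) 0 / Q
    let p₅ : ℝ := j * k * ℓ * π₁ / Q
    let p₆ : ℝ := j * k * ℓ * π₂ / Q
    let p₇ : ℝ := j * k * ℓ * π₃ / Q
    1 + ρ * Δt ≠ 0 →
    (p₁ * v (h + j, ℓ₀) + p₂ * v (h, ℓ₀ + k) + p₃ * v (h - j, ℓ₀) + p₄ * v (h, ℓ₀ - k)
        + p₅ * v y₅ + p₆ * v y₆ + p₇ * v y₇ + G * Δt) / (1 + ρ * Δt) - v (h, ℓ₀)
      = (Δt / (1 + ρ * Δt)) *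
        (-(ρ * v (h, ℓ₀))
          + max μh 0 * (v (h + j, ℓ₀) - v (h, ℓ₀)) / j
          - max (-μh) 0 * (v (h, ℓ₀) - v (h - j, ℓ₀)) / j
          + max μl 0 * (v (h, ℓ₀ + k) - v (h, ℓ₀)) / k
          - max (-μl) 0 * (v (h, ℓ₀) - v (h, ℓ₀ - k)) / k
          + ℓ * (π₁ * (v y₅ - v (h, ℓ₀)) + π₂ * (v y₆ - v (h, ℓ₀))
              + π₃ * (v y₇ - v (h, ℓ₀)))
          + G) :=
  scheme_consistency_general j k ℓ μh μl G ρ hj hk π₁ π₂ π₃ hπsum hQ h ℓ₀ y₅ y₆ y₇ v
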